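/- Consider the vector fields X₁ = ∂_{x₁}, X₂ = (1 − x₁)∂_{x₂} + x₁² ∂_{x₃} on ℝ³ and the control system y₁' = u₁, y₂' = u₂(1 − y₁), y₃' = u₂ y₁², with |u(t)| ≤ 1, starting at the origin, and let a ∈ (0,1). Then any admissible trajectory from the origin reaching the surface Γ_a = {(x₁, x₂, −(x₂ − a)²) : x₂ > 0} requires time at least a, and the trajectory t ↦ (0, t, 0) with control u = (0, 1) reaches Γ_a at time a. -/

import Mathlib

open MeasureTheory intervalIntegral

/-- The target surface `Γ_a = {(x₁, x₂, −(x₂ − a)²) : x₂ > 0}`. -/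
def GammaSurf (a : ℝ) : Set (Fin 3 → ℝ) :=
  {x | 0 < x 1 ∧ x 2 = -(x 1 - a) ^ 2}

private lemma abs_le_amgm (x lam : ℝ) (hl : 0 < lam) : |x| ≤ lam / 2 + x ^ 2 / (2 * lam) := by
  rw [show lam / 2 + x ^ 2 / (2 * lam) = (x ^ 2 + lam ^ 2) / (2 * lam) by field_simp; ring]
  rw [le_div_iff₀ (by positivity)]
  nlinarith [sq_abs x, sq_nonneg (|x| - lam)]

private lemma abs_le_amgm' (x mu : ℝ) (hm : 0 < mu) : |x| ≤ 1 / (2 * mu) + mu / 2 * x ^ 2 := by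
  have h := abs_le_amgm x (1 / mu) (by positivity)
  have h1 : (1 : ℝ) / mu / 2 = 1 / (2 * mu) := by field_simp
  have h2 : x ^ 2 / (2 * (1 / mu)) = mu / 2 * x ^ 2 := by field_simp
  linarith [h1 ▸ h2 ▸ h]

private lemma param_sq {x c d : ℝ} (hx : 0 ≤ x) (hc : 0 ≤ c) (hd : 0 ≤ d)
    (h : ∀ mu : ℝ, 0 < mu → x ≤ c / mu + mu * d) : x ^ 2 ≤ 4 * (c * d) := by
  rcases eq_or_lt_of_le hx with hx0 | hx0
  · nlinarith
  rcases eq_or_lt_of_le hd with hd0 | hd0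
  · rcases eq_or_lt_of_le hc with hc0 | hc0
    · have h1 := h 1 one_pos
      rw [← hc0, ← hd0] at h1
      norm_num at h1
      nlinarith
    · have h1 := h (2 * c / x) (by positivity)
      rw [← hd0] at h1
      have h2 : c / (2 * c / x) = x / 2 := by field_simp
      rw [h2] at h1
      nlinarith
  · have h1 := h (x / (2 * d)) (by positivity)
    have h2 : c / (x / (2 * d)) = 2 * c * d / x := by field_simp
    have h3 : x / (2 * d) * d = x / 2 := by field_simp
    rw [h2, h3] at h1
    have h4 : x / 2 * x ≤ 2 * c * d := (le_div_iff₀ hx0).1 (by linarith)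
    nlinarith


private lemma pointwise_bound (v q al E nn lam : ℝ) (hlam : 0 < lam)
    (hv1 : |v| ≤ 1 - al / 2) (hal : 0 ≤ al) (hq : q ^ 2 ≤ E)
    (hnn : 2 * nn = |v| - v) :
    v * (1 - q) - v * q ^ 2 / (2 * lam) ≤ (1 + lam / 2) - al / 2 + (E / lam - 2) * nn := by
  set d := 1 / lam with hddef
  have hdpos : 0 < d := by rw [hddef]; positivity
  have hd : lam * d = 1 := by rw [hddef]; field_simp
  have hc1 : v * q ^ 2 / (2 * lam) = v * q ^ 2 * (d / 2) := by
    rw [hddef]; field_simp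
  have hc2 : E / lam = E * d := by rw [hddef, mul_one_div]
  have hnn0 : 0 ≤ nn := by nlinarith [le_abs_self v]
  have hqa : |q| ≤ lam / 2 + q ^ 2 * (d / 2) := by
    have h1 := abs_le_amgm q lam hlam
    have h2 : q ^ 2 / (2 * lam) = q ^ 2 * (d / 2) := by
      rw [hddef]; field_simp
    linarith [h2.le, h2.ge]
  have e1 : -(v * q) ≤ |v| * (lam / 2 + q ^ 2 * (d / 2)) := by
    refine le_trans ?_ (mul_le_mul_of_nonneg_left hqa (abs_nonneg v))
    rw [← abs_mul]; exact neg_le_abs _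
  have e2 : nn * q ^ 2 * d ≤ nn * E * d :=
    mul_le_mul_of_nonneg_right (mul_le_mul_of_nonneg_left hq hnn0) hdpos.le
  have e3 : |v| * (lam / 2) ≤ lam / 2 := by nlinarith [hal, hlam, abs_nonneg v]
  have e5 : (|v| - v) * (q ^ 2 * d) = (2 * nn) * (q ^ 2 * d) := by rw [hnn]
  rw [hc1, hc2]
  nlinarith [e1, e2, e3, e5, hv1, hnn]

private lemma intInt_bdd_gen {f : ℝ → ℝ} {a b C : ℝ}
    (hm : AEStronglyMeasurable f (volume.restrict (Set.uIoc a b)))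
    (hC : ∀ s, |f s| ≤ C) : IntervalIntegrable f volume a b := by
  rw [intervalIntegrable_iff]
  refine Integrable.mono' (g := fun _ => C) ?_ hm
    (Filter.Eventually.of_forall fun s => by simpa [Real.norm_eq_abs] using hC s)
  refine integrableOn_const (ne_of_lt ?_)
  rw [Set.uIoc, Real.volume_Ioc]
  exact ENNReal.ofReal_lt_top

private lemma intInt_bdd {f : ℝ → ℝ} {t C : ℝ} (ht : 0 ≤ t)
    (hm : AEStronglyMeasurable f (volume.restrict (Set.Ioc 0 t)))
    (hC : ∀ s ∈ Set.Ioc (0:ℝ) t, |f s| ≤ C) : IntervalIntegrable f volume 0 t := by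
  rw [intervalIntegrable_iff, Set.uIoc_of_le ht]
  refine Integrable.mono' (g := fun _ => C) ?_ hm ?_
  · refine integrableOn_const (ne_of_lt ?_)
    rw [Real.volume_Ioc]; exact ENNReal.ofReal_lt_top
  · exact (ae_restrict_iff' measurableSet_Ioc).2
      (Filter.Eventually.of_forall fun s hs => by simpa [Real.norm_eq_abs] using hC s hs)

/-- for the system `y₁' = u₁, y₂' = u₂(1 − y₁), y₃' = u₂y₁²`
starting at the origin with `|u| ≤ 1`: every admissible trajectory reaching
`Γ_a` (`0 < a < 1`) needs time at least `a`, while the straight trajectory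
`t ↦ (0, t, 0)` (with constant control `u = (0,1)`) solves the system and
reaches `(0, a, 0) ∈ Γ_a` at time exactly `a`. -/
theorem stmt_13 (a : ℝ) (ha : 0 < a) (ha1 : a < 1) :
    (∀ (T : ℝ) (y : ℝ → Fin 3 → ℝ) (u : ℝ → Fin 2 → ℝ),
      0 ≤ T → Measurable u → (∀ t, (u t 0) ^ 2 + (u t 1) ^ 2 ≤ 1) →
      y 0 = 0 →
      (∀ t ∈ Set.Icc 0 T, y t = y 0 + ∫ s in (0:ℝ)..t,
          ![u s 0, u s 1 * (1 - y s 0), u s 1 * (y s 0) ^ 2]) →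
      y T ∈ GammaSurf a → a ≤ T) ∧
    ((∀ t : ℝ, HasDerivAt (fun τ : ℝ => (![0, τ, 0] : Fin 3 → ℝ))
        ![(0:ℝ) * 1, 1 * (1 - (![0, t, 0] : Fin 3 → ℝ) 0),
          1 * ((![0, t, 0] : Fin 3 → ℝ) 0) ^ 2] t) ∧
      (![0, a, 0] : Fin 3 → ℝ) ∈ GammaSurf a) := by
  constructor
  · intro T y u hT hu hbd hy0 heq hmem
    by_cases hT1 : (1:ℝ) ≤ T
    · linarith
    push_neg at hT1
    -- measurability and bounds of controls
    have hu0m : Measurable fun s => u s 0 := (measurable_pi_apply 0).comp hu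
    have hu1m : Measurable fun s => u s 1 := (measurable_pi_apply 1).comp hu
    have hb0 : ∀ s, |u s 0| ≤ 1 := by
      intro s; have h := hbd s; rw [abs_le]
      constructor <;> nlinarith [sq_nonneg (u s 1)]
    have hb1 : ∀ s, |u s 1| ≤ 1 := by
      intro s; have h := hbd s; rw [abs_le]
      constructor <;> nlinarith [sq_nonneg (u s 0)]
    have hb1' : ∀ s, |u s 1| ≤ 1 - (u s 0) ^ 2 / 2 := by
      intro s; have h := hbd s; rw [abs_le]
      constructor <;> nlinarith [sq_nonneg (u s 0), sq_nonneg ((u s 0) ^ 2)]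
    -- the primitive g of u0
    set g : ℝ → ℝ := fun t => ∫ s in (0:ℝ)..t, u s 0 with hgdef
    have hIu0 : ∀ p q : ℝ, IntervalIntegrable (fun s => u s 0) volume p q :=
      fun p q => intInt_bdd_gen hu0m.aestronglyMeasurable.restrict hb0
    have hg_cont : Continuous g := intervalIntegral.continuous_primitive (fun p q => hIu0 p q) 0
    have hg_abs : ∀ t, 0 ≤ t → |g t| ≤ t := by
      intro t ht
      have h := intervalIntegral.norm_integral_le_of_norm_le_const (C := 1)
        (f := fun s => u s 0) (a := 0) (b := t)
        (fun s _ => by simpa [Real.norm_eq_abs] using hb0 s)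
      simpa [Real.norm_eq_abs, abs_of_nonneg ht] using h
    -- the vector field along the trajectory
    set F : ℝ → Fin 3 → ℝ := fun s => ![u s 0, u s 1 * (1 - y s 0), u s 1 * (y s 0) ^ 2] with hFdef
    have happly : ∀ t ∈ Set.Icc (0:ℝ) T, IntervalIntegrable F volume 0 t →
        ∀ i, y t i = ∫ s in (0:ℝ)..t, F s i := by
      intro t ht hInt i
      have h2 := (ContinuousLinearMap.proj (R := ℝ) (φ := fun _ : Fin 3 => ℝ) i).intervalIntegral_comp_comm hInt
      have h1 := heq t ht
      rw [hy0] at h1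
      calc y t i = ((0 : Fin 3 → ℝ) + ∫ s in (0:ℝ)..t, F s) i := by rw [← h1]
      _ = (∫ s in (0:ℝ)..t, F s) i := by simp
      _ = ∫ s in (0:ℝ)..t, F s i := h2.symm
    have hy0comp : ∀ t ∈ Set.Icc (0:ℝ) T, IntervalIntegrable F volume 0 t → y t 0 = g t := by
      intro t ht hInt
      rw [happly t ht hInt 0, hgdef]
      simp [hFdef]
    have hybnd : ∀ t ∈ Set.Icc (0:ℝ) T, |y t 0| ≤ t := by
      intro t ht
      by_cases hInt : IntervalIntegrable F volume 0 t
      · rw [hy0comp t ht hInt]; exact hg_abs t ht.1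
      · have h1 := heq t ht
        rw [intervalIntegral.integral_undef hInt, hy0] at h1
        rw [h1]; simpa using ht.1
    -- the set where F is interval integrable
    set B : Set ℝ := {t | t ∈ Set.Icc (0:ℝ) T ∧ IntervalIntegrable F volume 0 t} with hBdef
    have hBord : B.OrdConnected := by
      constructor
      intro p hp q hq r hr
      refine ⟨⟨le_trans hp.1.1 hr.1, le_trans hr.2 hq.1.2⟩, hq.2.mono_set ?_⟩
      rw [Set.uIcc_of_le (le_trans hp.1.1 hr.1), Set.uIcc_of_le (le_trans hp.1.1 (le_trans hr.1 hr.2))]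
      exact Set.Icc_subset_Icc (le_refl 0) hr.2
    have hBmeas : MeasurableSet B := hBord.measurableSet
    set h : ℝ → ℝ := B.indicator g with hhdef
    have hhm : Measurable h := hg_cont.measurable.indicator hBmeas
    have hhy : ∀ s ∈ Set.Icc (0:ℝ) T, y s 0 = h s := by
      intro s hs
      by_cases hsB : s ∈ B
      · rw [hhdef, Set.indicator_of_mem hsB]; exact hy0comp s hs hsB.2
      · rw [hhdef, Set.indicator_of_notMem hsB]
        have hni : ¬ IntervalIntegrable F volume 0 s := fun hInt => hsB ⟨hs, hInt⟩
        have h1 := heq s hs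
        rw [intervalIntegral.integral_undef hni, hy0] at h1
        rw [h1]; simp
    -- F is integrable on [0,t] for all t in [0,T]
    have hFint : ∀ t ∈ Set.Icc (0:ℝ) T, IntervalIntegrable F volume 0 t := by
      intro t ht
      rw [intervalIntegrable_iff, Set.uIoc_of_le ht.1]
      have hF'm : Measurable (fun s => (![u s 0, u s 1 * (1 - h s), u s 1 * (h s) ^ 2] : Fin 3 → ℝ)) := by
        rw [measurable_pi_iff]
        intro i
        fin_cases i
        · simpa using hu0m
        · have hm : Measurable fun s => u s 1 * (1 - h s) := hu1m.mul (measurable_const.sub hhm)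
          simpa using hm
        · have hm : Measurable fun s => u s 1 * (h s) ^ 2 := hu1m.mul (hhm.pow_const 2)
          simpa using hm
      have hmeas : AEStronglyMeasurable F (volume.restrict (Set.Ioc 0 t)) := by
        refine hF'm.aestronglyMeasurable.congr ?_
        refine (ae_restrict_iff' measurableSet_Ioc).2 (Filter.Eventually.of_forall fun s hs => ?_)
        have hsIcc : s ∈ Set.Icc (0:ℝ) T := ⟨hs.1.le, le_trans hs.2 ht.2⟩
        rw [hFdef]
        simp only [← hhy s hsIcc]
      refine Integrable.mono' (g := fun _ => 2) ?_ hmeas ?_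
      · refine integrableOn_const (ne_of_lt ?_)
        rw [Real.volume_Ioc]; exact ENNReal.ofReal_lt_top
      · refine (ae_restrict_iff' measurableSet_Ioc).2 (Filter.Eventually.of_forall fun s hs => ?_)
        have hsIcc : s ∈ Set.Icc (0:ℝ) T := ⟨hs.1.le, le_trans hs.2 ht.2⟩
        have h0 : |y s 0| ≤ 1 := le_trans (hybnd s hsIcc) (le_trans hsIcc.2 hT1.le)
        rw [hFdef]
        refine (pi_norm_le_iff_of_nonneg (by norm_num)).2 fun i => ?_
        fin_cases i
        · simpa [Real.norm_eq_abs] using le_trans (hb0 s) (by norm_num)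
        · show ‖u s 1 * (1 - y s 0)‖ ≤ 2
          rw [Real.norm_eq_abs, abs_mul]
          have h0' := abs_le.1 h0
          have h2 : |1 - y s 0| ≤ 2 := by rw [abs_le]; constructor <;> linarith
          nlinarith [abs_nonneg (u s 1), abs_nonneg (1 - y s 0), hb1 s]
        · show ‖u s 1 * (y s 0) ^ 2‖ ≤ 2
          rw [Real.norm_eq_abs, abs_mul, abs_pow]
          nlinarith [abs_nonneg (u s 1), abs_nonneg (y s 0), hb1 s, sq_abs (y s 0),
            sq_nonneg (y s 0), abs_nonneg (y s 0)]
    -- identification of y with explicit integrals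
    have hgy : ∀ s ∈ Set.Icc (0:ℝ) T, y s 0 = g s := fun s hs => hy0comp s hs (hFint s hs)
    have hTmem : T ∈ Set.Icc (0:ℝ) T := ⟨hT, le_refl T⟩
    have hy2 : y T 1 = ∫ s in (0:ℝ)..T, u s 1 * (1 - g s) := by
      rw [happly T hTmem (hFint T hTmem) 1]
      apply intervalIntegral.integral_congr
      intro s hs
      rw [Set.uIcc_of_le hT] at hs
      show F s 1 = u s 1 * (1 - g s)
      rw [hFdef]
      show u s 1 * (1 - y s 0) = u s 1 * (1 - g s)
      rw [hgy s hs]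
    have hy3 : y T 2 = ∫ s in (0:ℝ)..T, u s 1 * (g s) ^ 2 := by
      rw [happly T hTmem (hFint T hTmem) 2]
      apply intervalIntegral.integral_congr
      intro s hs
      rw [Set.uIcc_of_le hT] at hs
      show F s 2 = u s 1 * (g s) ^ 2
      rw [hFdef]
      show u s 1 * (y s 0) ^ 2 = u s 1 * (g s) ^ 2
      rw [hgy s hs]
    -- basic integrable families
    have hIabsu0 : ∀ p q : ℝ, IntervalIntegrable (fun s => |u s 0|) volume p q :=
      fun p q => intInt_bdd_gen hu0m.abs.aestronglyMeasurable.restrict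
        (fun s => by rw [abs_abs]; exact hb0 s)
    have hIu0sq : ∀ p q : ℝ, IntervalIntegrable (fun s => (u s 0) ^ 2) volume p q := by
      intro p q
      refine intInt_bdd_gen (C := 1) (hu0m.pow_const 2).aestronglyMeasurable.restrict (fun s => ?_)
      rw [abs_pow]
      nlinarith [hb0 s, abs_nonneg (u s 0)]
    obtain ⟨E, hEdef⟩ : ∃ x : ℝ, x = ∫ s in (0:ℝ)..T, (u s 0) ^ 2 := ⟨_, rfl⟩
    have hEnn : 0 ≤ E := by
      rw [hEdef]; exact intervalIntegral.integral_nonneg hT (fun s _ => sq_nonneg _)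
    have hEle : ∀ s ∈ Set.Icc (0:ℝ) T, ∫ r in (0:ℝ)..s, (u r 0) ^ 2 ≤ E := by
      intro s hs
      have hadd := intervalIntegral.integral_add_adjacent_intervals (hIu0sq 0 s) (hIu0sq s T)
      have h2 : 0 ≤ ∫ r in s..T, (u r 0) ^ 2 :=
        intervalIntegral.integral_nonneg hs.2 (fun r _ => sq_nonneg _)
      rw [hEdef]; linarith only [hadd, h2]
    have hgsq : ∀ s ∈ Set.Icc (0:ℝ) T, (g s) ^ 2 ≤ E := by
      intro s hs
      have hpar : ∀ mu : ℝ, 0 < mu → |g s| ≤ (s / 2) / mu + mu * (E / 2) := by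
        intro mu hmu
        have h1 : |g s| ≤ ∫ r in (0:ℝ)..s, |u r 0| := by
          rw [hgdef]; exact intervalIntegral.abs_integral_le_integral_abs hs.1
        have h2 : ∫ r in (0:ℝ)..s, |u r 0| ≤ ∫ r in (0:ℝ)..s, (1 / (2 * mu) + mu / 2 * (u r 0) ^ 2) := by
          refine intervalIntegral.integral_mono_on hs.1 (hIabsu0 0 s)
            ((_root_.intervalIntegrable_const).add ((hIu0sq 0 s).const_mul _)) (fun r _ => ?_)
          exact abs_le_amgm' (u r 0) mu hmu
        have h3 : ∫ r in (0:ℝ)..s, (1 / (2 * mu) + mu / 2 * (u r 0) ^ 2)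
            = s * (1 / (2 * mu)) + mu / 2 * ∫ r in (0:ℝ)..s, (u r 0) ^ 2 := by
          rw [intervalIntegral.integral_add (_root_.intervalIntegrable_const) ((hIu0sq 0 s).const_mul _),
            intervalIntegral.integral_const, intervalIntegral.integral_const_mul]
          simp [smul_eq_mul]
        have h4 := hEle s hs
        have h5 : mu / 2 * ∫ r in (0:ℝ)..s, (u r 0) ^ 2 ≤ mu / 2 * E :=
          mul_le_mul_of_nonneg_left h4 (by positivity)
        have he : s * (1 / (2 * mu)) = (s / 2) / mu := by field_simp
        have he2 : mu * (E / 2) = mu / 2 * E := by ring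
        linarith only [h1, h2, h3.le, h3.ge, h5, he.le, he.ge, he2.le, he2.ge]
      have h5 := param_sq (abs_nonneg (g s)) (by linarith [hs.1] : (0:ℝ) ≤ s / 2)
        (by linarith : (0:ℝ) ≤ E / 2) hpar
      rw [sq_abs] at h5
      have h6 : s * E ≤ E := by nlinarith only [hs.2, hT1, hEnn, hs.1]
      nlinarith only [h5, h6]
    -- the negative part of the second control
    obtain ⟨n, hndef⟩ : ∃ f : ℝ → ℝ, f = fun s => (|u s 1| - u s 1) / 2 := ⟨_, rfl⟩
    have hnm : Measurable n := by rw [hndef]; exact (hu1m.abs.sub hu1m).div_const 2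
    have hnnn : ∀ s, 0 ≤ n s := by
      intro s
      simp only [hndef]
      linarith [le_abs_self (u s 1)]
    have hnb : ∀ s, |n s| ≤ 1 := by
      intro s
      simp only [hndef]
      have h1 := abs_le.1 (hb1 s)
      have h2 := le_abs_self (u s 1)
      rw [abs_le]; constructor
      · linarith [h2]
      · linarith [hb1 s, h1.1]
    have hIn : ∀ p q : ℝ, IntervalIntegrable n volume p q :=
      fun p q => intInt_bdd_gen hnm.aestronglyMeasurable.restrict hnb
    obtain ⟨N, hNdef⟩ : ∃ x : ℝ, x = ∫ s in (0:ℝ)..T, n s := ⟨_, rfl⟩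
    have hNnn : 0 ≤ N := by
      rw [hNdef]; exact intervalIntegral.integral_nonneg hT (fun s _ => hnnn s)
    have hgb : ∀ s ∈ Set.Icc (0:ℝ) T, |g s| ≤ 1 :=
      fun s hs => le_trans (hg_abs s hs.1) (le_trans hs.2 hT1.le)
    -- key family of estimates
    have key : ∀ lam : ℝ, 0 < lam → a ≤ T - E / 2 - 2 * N + lam + E * N / lam := by
      intro lam hlam
      have hy2v : y T 2 = -(y T 1 - a) ^ 2 := hmem.2
      have hstep1 : a ≤ y T 1 + |y T 1 - a| := by
        rcases le_or_gt a (y T 1) with hc | hc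
        · linarith [abs_nonneg (y T 1 - a)]
        · rw [abs_of_neg (by linarith : y T 1 - a < 0)]; linarith
      have hstep2 : |y T 1 - a| ≤ lam / 2 + (y T 1 - a) ^ 2 / (2 * lam) := abs_le_amgm _ lam hlam
      have hI1 : IntervalIntegrable (fun s => u s 1 * (1 - g s)) volume 0 T := by
        refine intInt_bdd (C := 2) hT
          ((hu1m.mul (measurable_const.sub hg_cont.measurable)).aestronglyMeasurable.restrict)
          (fun s hs => ?_)
        have hg1 := abs_le.1 (hgb s ⟨hs.1.le, hs.2⟩)
        rw [abs_mul]
        have h2 : |1 - g s| ≤ 2 := by rw [abs_le]; constructor <;> linarith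
        nlinarith [abs_nonneg (u s 1), hb1 s, abs_nonneg (1 - g s)]
      have hI2' : IntervalIntegrable (fun s => u s 1 * (g s) ^ 2) volume 0 T := by
        refine intInt_bdd (C := 1) hT
          ((hu1m.mul (hg_cont.measurable.pow_const 2)).aestronglyMeasurable.restrict)
          (fun s hs => ?_)
        have hg1 := hgb s ⟨hs.1.le, hs.2⟩
        rw [abs_mul, abs_pow]
        nlinarith [abs_nonneg (u s 1), hb1 s, abs_nonneg (g s), sq_nonneg (|g s|)]
      have hI2 : IntervalIntegrable (fun s => u s 1 * (g s) ^ 2 / (2 * lam)) volume 0 T :=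
        hI2'.div_const (2 * lam)
      have hIΨ : IntervalIntegrable (fun s => (1 + lam / 2) - (u s 0) ^ 2 / 2 + (E / lam - 2) * n s) volume 0 T :=
        ((_root_.intervalIntegrable_const).sub ((hIu0sq 0 T).div_const 2)).add ((hIn 0 T).const_mul _)
      obtain ⟨IA, hIA⟩ : ∃ x : ℝ, x = ∫ s in (0:ℝ)..T, (u s 1 * (1 - g s) - u s 1 * (g s) ^ 2 / (2 * lam)) := ⟨_, rfl⟩
      obtain ⟨IB, hIB⟩ : ∃ x : ℝ, x = ∫ s in (0:ℝ)..T, ((1 + lam / 2) - (u s 0) ^ 2 / 2 + (E / lam - 2) * n s) := ⟨_, rfl⟩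
      have hmono : IA ≤ IB := by
        rw [hIA, hIB]
        refine intervalIntegral.integral_mono_on hT (hI1.sub hI2) hIΨ (fun s hs => ?_)
        have hnns : 2 * n s = |u s 1| - u s 1 := by simp only [hndef]; ring
        exact pointwise_bound (u s 1) (g s) ((u s 0) ^ 2) E (n s) lam hlam
          (hb1' s) (sq_nonneg _) (hgsq s hs) hnns
      have hΨint : IB = (1 + lam / 2) * T - E / 2 + (E / lam - 2) * N := by
        rw [hIB]
        rw [intervalIntegral.integral_add
            ((_root_.intervalIntegrable_const).sub ((hIu0sq 0 T).div_const 2)) ((hIn 0 T).const_mul _),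
          intervalIntegral.integral_sub (_root_.intervalIntegrable_const) ((hIu0sq 0 T).div_const 2),
          intervalIntegral.integral_const, intervalIntegral.integral_const_mul,
          intervalIntegral.integral_div]
        rw [hEdef, hNdef]
        simp only [smul_eq_mul, sub_zero]
        ring
      have hΦval : y T 1 - y T 2 / (2 * lam) = IA := by
        rw [hIA, intervalIntegral.integral_sub hI1 hI2, intervalIntegral.integral_div, hy2, hy3]
      have hZ : (y T 1 - a) ^ 2 / (2 * lam) = -(y T 2 / (2 * lam)) := by
        rw [hy2v]; ring
      have hfin1 : a ≤ y T 1 - y T 2 / (2 * lam) + lam / 2 := by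
        linarith only [hstep1, hstep2, hZ.le, hZ.ge]
      have hl1 : lam / 2 * T + lam / 2 ≤ lam := by nlinarith only [hT1.le, hlam]
      have hl2 : (E / lam) * N = E * N / lam := by ring
      have hfin2 : a ≤ ((1 + lam / 2) * T - E / 2 + (E / lam - 2) * N) + lam / 2 := by
        linarith only [hfin1, hΦval.le, hΦval.ge, hmono, hΨint.le, hΨint.ge]
      nlinarith only [hfin2, hl1, hl2]
    -- conclusion
    by_contra hcon
    push_neg at hcon
    by_cases hEN : E * N = 0
    · have hk := key ((a - T) / 2) (by linarith)
      rw [hEN, zero_div] at hk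
      linarith only [hk, hcon, hEnn, hNnn]
    · have hENpos : 0 < E * N := lt_of_le_of_ne (mul_nonneg hEnn hNnn) (Ne.symm hEN)
      have hrpos : 0 < Real.sqrt (E * N) := Real.sqrt_pos.2 hENpos
      have hsq : Real.sqrt (E * N) ^ 2 = E * N := Real.sq_sqrt hENpos.le
      have hk := key _ hrpos
      have hdiv : E * N / Real.sqrt (E * N) = Real.sqrt (E * N) := by
        rw [div_eq_iff hrpos.ne']
        linarith only [Real.mul_self_sqrt hENpos.le]
      rw [hdiv] at hk
      have hle : 2 * Real.sqrt (E * N) ≤ E / 2 + 2 * N := by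
        nlinarith only [hsq, hrpos.le, sq_nonneg (E / 2 - 2 * N), hEnn, hNnn]
      linarith only [hk, hle, hcon]
  · constructor
    · intro t
      have hv : (![(0:ℝ) * 1, 1 * (1 - (![0, t, 0] : Fin 3 → ℝ) 0),
            1 * ((![0, t, 0] : Fin 3 → ℝ) 0) ^ 2]) = ![0, 1, 0] := by
        funext i
        fin_cases i <;> norm_num
      rw [hv]
      apply hasDerivAt_pi.2
      intro i
      fin_cases i
      · simpa using hasDerivAt_const t (0:ℝ)
      · simpa using hasDerivAt_id' t
      · simpa using hasDerivAt_const t (0:ℝ)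
    · constructor
      · simpa using ha
      · norm_num [GammaSurf]
        rfl
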